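/- Let g be analytic on the unit disc Δ with g(0) = 0 and g'(0) = 1, and suppose there is an analytic function φ : Δ → ℂ with φ(0) = 0 and |φ(z)| < 1 such that z·g'(z) = g(z)·cos(φ(z)) for all z ∈ Δ. Then for all z ∈ Δ with z ≠ 0, |g(z)/g'(z)| ≤ |z| / cos |z|. -/

import Mathlib

lemma abs_cos_ge (w : ℂ) : |Real.cos w.re| ≤ ‖Complex.cos w‖ := by
  set a := Real.cos w.re
  set b := Real.sin w.re
  set c := Real.cosh w.im
  set d := Real.sinh w.im
  have hw : Complex.cos w = (↑(a * c) : ℂ) - ↑(b * d) * Complex.I := by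
    conv_lhs => rw [← Complex.re_add_im w, Complex.cos_add_mul_I]
    push_cast
    rw [Complex.ofReal_cos, Complex.ofReal_sin, Complex.ofReal_cosh, Complex.ofReal_sinh]
  have h1 : ‖Complex.cos w‖ ^ 2 = (a * c) ^ 2 + (b * d) ^ 2 := by
    rw [hw, Complex.sq_norm, Complex.normSq_apply]
    simp
    ring
  have h2 : (a * c) ^ 2 + (b * d) ^ 2 = a ^ 2 + d ^ 2 := by
    have h3 : b ^ 2 + a ^ 2 = 1 := Real.sin_sq_add_cos_sq w.re
    have h4 : c ^ 2 = d ^ 2 + 1 := Real.cosh_sq w.im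
    nlinarith
  have key : |a| ^ 2 ≤ ‖Complex.cos w‖ ^ 2 := by
    rw [h1, h2, sq_abs]
    nlinarith [sq_nonneg d]
  nlinarith [key, abs_nonneg a, norm_nonneg (Complex.cos w)]

lemma cos_abs_le (w : ℂ) (hw : ‖w‖ < Real.pi) :
    Real.cos (‖w‖) ≤ ‖Complex.cos w‖ := by
  refine le_trans ?_ (abs_cos_ge w)
  have h1 : |w.re| ≤ ‖w‖ := Complex.abs_re_le_norm w
  calc Real.cos (‖w‖) ≤ Real.cos |w.re| :=
        Real.cos_le_cos_of_nonneg_of_le_pi (abs_nonneg _) hw.le h1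
    _ = Real.cos w.re := Real.cos_abs w.re
    _ ≤ |Real.cos w.re| := le_abs_self _

theorem stmt_9 (g φ : ℂ → ℂ)
    (hg : DifferentiableOn ℂ g (Metric.ball (0 : ℂ) 1))
    (hg0 : g 0 = 0) (hg'0 : deriv g 0 = 1)
    (hφ : DifferentiableOn ℂ φ (Metric.ball (0 : ℂ) 1))
    (hφ0 : φ 0 = 0)
    (hφb : ∀ z ∈ Metric.ball (0 : ℂ) 1, ‖φ z‖ < 1)
    (hsub : ∀ z ∈ Metric.ball (0 : ℂ) 1, z * deriv g z = g z * Complex.cos (φ z)) :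
    ∀ z ∈ Metric.ball (0 : ℂ) 1, z ≠ 0 →
      ‖g z / deriv g z‖ ≤ ‖z‖ / Real.cos (‖z‖) := by
  intro z hz hz0
  have hz1 : ‖z‖ < 1 := mem_ball_zero_iff.1 hz
  have hpi2 : (1 : ℝ) < Real.pi / 2 := by
    have := Real.pi_gt_three; linarith
  have h1 : ‖φ z‖ ≤ ‖z‖ :=
    Complex.norm_le_norm_of_mapsTo_ball hφ
      (fun x hx => mem_closedBall_zero_iff.2 (hφb x hx).le) hφ0 hz1
  have hφpi : ‖φ z‖ < Real.pi := by
    have := hφb z hz; linarith [Real.pi_gt_three]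
  have h2 : Real.cos (‖z‖) ≤ ‖Complex.cos (φ z)‖ := by
    refine le_trans ?_ (cos_abs_le (φ z) hφpi)
    exact Real.cos_le_cos_of_nonneg_of_le_pi (norm_nonneg _)
      (by linarith [Real.pi_gt_three]) h1
  have hcpos : 0 < Real.cos (‖z‖) :=
    Real.cos_pos_of_mem_Ioo ⟨by linarith [norm_nonneg z, Real.pi_pos], by linarith⟩
  have hcosne : Complex.cos (φ z) ≠ 0 := by
    intro h
    rw [h] at h2
    simp at h2
    linarith
  by_cases hgd : deriv g z = 0
  · have hgz : g z = 0 := by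
      have := hsub z hz
      rw [hgd, mul_zero] at this
      exact (mul_eq_zero.1 this.symm).resolve_right hcosne
    rw [hgz]
    simp
    positivity
  · have heq : g z / deriv g z = z / Complex.cos (φ z) := by
      field_simp
      linear_combination -(hsub z hz)
    rw [heq, norm_div]
    exact div_le_div_of_nonneg_left (norm_nonneg z) hcpos h2
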